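/- Let Γ̄₁^i(𝔑) = {[[a,b],[c,d]] ∈ SL₂(O_F) : a, d ∈ 1 + 𝔑, b ∈ 𝔞_i, c ∈ 𝔑𝔞_i^{-1}}. For b ∈ F and c ∈ 𝔞_i^{-1}𝔑, the matrix γ_c = [[1,0],[c,1]] lies in Γ̄₁^i(𝔑) (at the infinite place), and in relative homology H₁(X₁^i(𝔑), C₁^i(𝔑), ℤ) one has the identity {∞, b}_{Γ̄₁^i(𝔑)} = γ_c{∞, 0}_{Γ̄₁^i(𝔑)} + {0, ∞}_{Γ̄₁^i(𝔑)} + {∞, b/(bc+1)}_{Γ̄₁^i(𝔑)}, provided bc + 1 ≠ 0. In particular, if b = β/α^n and c ∈ 𝔑∏_j 𝔞_j^{-1} is chosen with b/(bc+1) = β/α̃^n for another generator α̃, then {∞, β/α^n}_{Γ̄} and {∞, β/α̃^n}_{Γ̄} differ by the boundary-trivial cycle γ_c{∞,0} + {0,∞}, and are equal when γ_c ∈ Γ̄₁^i(𝔑). -/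

import Mathlib

open NumberField

/-! The cocycle relation alone forces `{α, α} = 0` and `{α, β} = -{β, α}`. Splitting both
`{∞, b}` and `{∞, γb}` at the cusp `z₀` fixed by `γ` reduces the identity to
`{z₀, γb} = {γz₀, γb} = {z₀, b}`, which is `Γ`-invariance. -/

section ModularSymbol

variable {P H : Type*} [AddCommGroup H] {s : P → P → H}
  (hadd : ∀ α₁ α₂ α₃ : P, s α₁ α₂ = s α₁ α₃ + s α₃ α₂)
include hadd

theorem modularSymbol_self_eq_zero (α : P) : s α α = 0 := by
  simpa using hadd α α α

theorem modularSymbol_add_swap (α β : P) : s α β + s β α = 0 := by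
  rw [← hadd, modularSymbol_self_eq_zero hadd]

variable {G : Type*} [SMul G P] (hinv : ∀ (γ : G) (α β : P), s (γ • α) (γ • β) = s α β)
  {γ : G} {z₀ : P}
include hinv

theorem modularSymbol_smul_right_of_smul_eq (hz : γ • z₀ = z₀) (α β : P) :
    s α (γ • β) = s α β := by
  have hfix : s z₀ (γ • β) = s z₀ β := by
    calc s z₀ (γ • β) = s (γ • z₀) (γ • β) := by rw [hz]
      _ = s z₀ β := hinv γ z₀ β
  rw [hadd α (γ • β) z₀, hadd α β z₀, hfix]

theorem modularSymbol_eq_smul_add_add_of_smul_eq (hz : γ • z₀ = z₀) (α β : P) :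
    s α β = s (γ • α) (γ • z₀) + s z₀ α + s α (γ • β) := by
  rw [hinv, modularSymbol_add_swap hadd, zero_add,
    modularSymbol_smul_right_of_smul_eq hadd hinv hz]

end ModularSymbol

theorem stmt19_general (K : Type*) [Field K]
    (𝔑set 𝔞set 𝔠set : Submodule (𝓞 K) K)
    -- the modular symbol setup
    (H : Type*) [AddCommGroup H]
    (G : Type*) [Group G] (P : Type*) [MulAction G P]
    (s : P → P → H)
    (hrel₂ : ∀ α₁ α₂ α₃ : P, s α₁ α₂ = s α₁ α₃ + s α₃ α₂)
    (hrel₃ : ∀ (γ : G) (α β : P), s (γ • α) (γ • β) = s α β) :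
    -- (a) γ_c = [[1,0],[c,1]] lies in Γ̄₁^i(𝔑)
    (∀ c : K, c ∈ 𝔠set →
      Matrix.det !![(1 : K), 0; c, 1] = 1 ∧
      (!![(1 : K), 0; c, 1]) 0 0 - 1 ∈ 𝔑set ∧
      (!![(1 : K), 0; c, 1]) 1 1 - 1 ∈ 𝔑set ∧
      (!![(1 : K), 0; c, 1]) 0 1 ∈ 𝔞set ∧
      (!![(1 : K), 0; c, 1]) 1 0 ∈ 𝔠set) ∧
    -- (b) the modular symbol identity for γ fixing the cusp z₀ ( = 0 )
    (∀ (γ : G) (inf z₀ b : P), γ • z₀ = z₀ →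
      s inf b = s (γ • inf) (γ • z₀) + s z₀ inf + s inf (γ • b) ∧
      s inf b = s inf (γ • b)) := by
  refine ⟨fun c hc => ?_, fun γ inf z₀ b hz => ?_⟩
  · simp only [Matrix.det_fin_two_of, Matrix.of_apply, Matrix.cons_val', Matrix.cons_val_zero,
      Matrix.cons_val_one, Matrix.empty_val', Matrix.cons_val_fin_one, sub_self]
    exact ⟨by ring, 𝔑set.zero_mem, 𝔑set.zero_mem, 𝔞set.zero_mem, hc⟩
  · exact ⟨modularSymbol_eq_smul_add_add_of_smul_eq hrel₂ hrel₃ hz inf b,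
      (modularSymbol_smul_right_of_smul_eq hrel₂ hrel₃ hz inf b).symm⟩

theorem stmt19 (K : Type*) [Field K] [NumberField K]
    (𝔑set 𝔞set 𝔠set : Submodule (𝓞 K) K)
    -- the modular symbol setup
    (H : Type*) [AddCommGroup H]
    (G : Type*) [Group G] (P : Type*) [MulAction G P]
    (s : P → P → H)
    (hrel₁ : ∀ α : P, s α α = 0)
    (hrel₂ : ∀ α₁ α₂ α₃ : P, s α₁ α₂ = s α₁ α₃ + s α₃ α₂)
    (hrel₃ : ∀ (γ : G) (α β : P), s (γ • α) (γ • β) = s α β) :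
    -- (a) γ_c = [[1,0],[c,1]] lies in Γ̄₁^i(𝔑)
    (∀ c : K, c ∈ 𝔠set →
      Matrix.det !![(1 : K), 0; c, 1] = 1 ∧
      (!![(1 : K), 0; c, 1]) 0 0 - 1 ∈ 𝔑set ∧
      (!![(1 : K), 0; c, 1]) 1 1 - 1 ∈ 𝔑set ∧
      (!![(1 : K), 0; c, 1]) 0 1 ∈ 𝔞set ∧
      (!![(1 : K), 0; c, 1]) 1 0 ∈ 𝔠set) ∧
    -- (b) the modular symbol identity for γ fixing the cusp z₀ ( = 0 )
    (∀ (γ : G) (inf z₀ b : P), γ • z₀ = z₀ →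
      s inf b = s (γ • inf) (γ • z₀) + s z₀ inf + s inf (γ • b) ∧
      s inf b = s inf (γ • b)) :=
  stmt19_general K 𝔑set 𝔞set 𝔠set H G P s hrel₂ hrel₃
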